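/- The product measure ν^{N,p}_φ is invariant for the zero-range generator: for every bounded function f : ℕ^{T^d_N} → ℝ one has ∫ 𝓛_N f dν^{N,p}_φ = 0. -/

import Mathlib

/-! The one-site marginals satisfy detailed balance, `g(n+1) ν¹_φ(n+1) = φ ν¹_φ(n)`, which yields
the Mecke-type identity `E[g(η x) G(η)] = (φ/pₓ) E[G(η + δₓ)]` for the product measure. Since
`(η + δₓ)^{x,y} = η + δ_y`, the expectation of the jump term `pₓ g(η x) (f(η^{x,y}) − f(η))` is
`φ (E f(η + δ_y) − E f(η + δₓ))`, and these differences cancel when summed over the symmetric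
nearest-neighbour relation. On the countable configuration space every expectation involved is an
absolutely convergent series, because `f` is bounded and the one-site marginals are summable. -/

open scoped BigOperators
open MeasureTheory

/-- The "generalized factorial" `g(n)! = g(1)·g(2)···g(n)`, with `g(0)! = 1`. -/
noncomputable def gfact (g : ℕ → ℝ) (n : ℕ) : ℝ := ∏ i ∈ Finset.Icc 1 n, g i

/-- The partition function `Z(φ) = Σ_{n≥0} φⁿ/g(n)!`. -/
noncomputable def Zfun (g : ℕ → ℝ) (φ : ℝ) : ℝ := ∑' n : ℕ, φ ^ n / gfact g n

/-- The one-site marginal `ν¹_φ(n) = φⁿ/(Z(φ)·g(n)!)`. -/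
noncomputable def nu1 (g : ℕ → ℝ) (φ : ℝ) (n : ℕ) : ℝ := φ ^ n / (Zfun g φ * gfact g n)

/-- The one-site marginal `ν¹_φ` as a measure on `ℕ`. -/
noncomputable def nuM (g : ℕ → ℝ) (φ : ℝ) : Measure ℕ :=
  Measure.sum fun n => (ENNReal.ofReal (nu1 g φ n)) • Measure.dirac n

/-- Nearest neighbors on the discrete torus `T^d_N = (ℤ/Nℤ)^d`:
`x ∼ y` iff `y = x ± e_i` for some coordinate direction `i`. -/
def nbr {d N : ℕ} (x y : Fin d → ZMod N) : Prop :=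
  ∃ i : Fin d, y = x + Pi.single i 1 ∨ y = x - Pi.single i 1

/-- The configuration `η^{x,y}` obtained from `η` after one particle jumps from `x` to `y`. -/
def move {T : Type*} [DecidableEq T] (η : T → ℕ) (x y : T) : T → ℕ :=
  Function.update (Function.update η x (η x - 1)) y (η y + 1)

open Classical in
/-- The zero-range generator
`𝓛_N f(η) = Σ_{(x,y): x∼y} p_x·g(η(x))·(f(η^{x,y}) − f(η))`,
the sum over ordered pairs of nearest neighbors (the term vanishes when `η(x)=0`
since `g(0)=0`). -/
noncomputable def gen {d N : ℕ} [NeZero N] (g : ℕ → ℝ) (p : (Fin d → ZMod N) → ℝ)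
    (f : ((Fin d → ZMod N) → ℕ) → ℝ) (η : (Fin d → ZMod N) → ℕ) : ℝ :=
  ∑ x, ∑ y, if nbr x y then p x * g (η x) * (f (move η x y) - f η) else 0

section OneSite

variable {g : ℕ → ℝ} {φ : ℝ}

lemma gfact_zero (g : ℕ → ℝ) : gfact g 0 = 1 := by
  simp [gfact]

lemma gfact_succ (g : ℕ → ℝ) (n : ℕ) : gfact g (n + 1) = gfact g n * g (n + 1) :=
  Finset.prod_Icc_succ_top (by omega) g

lemma gfact_pos (hgpos : ∀ n, 1 ≤ n → 0 < g n) (n : ℕ) : 0 < gfact g n :=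
  Finset.prod_pos fun i hi => hgpos i (Finset.mem_Icc.mp hi).1

lemma pow_mul_factorial_le_gfact {g₀ : ℝ} (hg₀ : 0 ≤ g₀) (hlin : ∀ n, g₀ * n ≤ g n) (n : ℕ) :
    g₀ ^ n * n.factorial ≤ gfact g n := by
  induction n with
  | zero => simp [gfact_zero]
  | succ n ih =>
    rw [gfact_succ, pow_succ, Nat.factorial_succ, Nat.cast_mul]
    calc g₀ ^ n * g₀ * (((n + 1 : ℕ) : ℝ) * n.factorial)
        = g₀ ^ n * n.factorial * (g₀ * (n + 1 : ℕ)) := by ring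
      _ ≤ gfact g n * g (n + 1) :=
        mul_le_mul ih (hlin _) (by positivity) ((by positivity : (0 : ℝ) ≤ _).trans ih)

lemma summable_pow_div_gfact {g₀ : ℝ} (hg₀ : 0 < g₀) (hlin : ∀ n, g₀ * n ≤ g n) (hφ : 0 ≤ φ) :
    Summable fun n => φ ^ n / gfact g n := by
  have hgf n : 0 < gfact g n := (by positivity : (0 : ℝ) < g₀ ^ n * n.factorial).trans_le
    (pow_mul_factorial_le_gfact hg₀.le hlin n)
  refine (Real.summable_pow_div_factorial (φ / g₀)).of_nonneg_of_le
    (fun n => div_nonneg (pow_nonneg hφ n) (hgf n).le) fun n => ?_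
  rw [div_pow, div_div]
  gcongr
  exact pow_mul_factorial_le_gfact hg₀.le hlin n

lemma one_le_Zfun (hgpos : ∀ n, 1 ≤ n → 0 < g n) (hφ : 0 ≤ φ)
    (hZ : Summable fun n => φ ^ n / gfact g n) : 1 ≤ Zfun g φ := by
  simpa [Zfun, gfact_zero] using hZ.le_tsum 0 fun n _ => div_nonneg (pow_nonneg hφ n)
    (gfact_pos hgpos n).le

lemma nu1_nonneg (hgpos : ∀ n, 1 ≤ n → 0 < g n) (hφ : 0 ≤ φ)
    (hZ : Summable fun n => φ ^ n / gfact g n) (n : ℕ) : 0 ≤ nu1 g φ n :=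
  div_nonneg (pow_nonneg hφ n)
    (mul_nonneg (zero_le_one.trans (one_le_Zfun hgpos hφ hZ)) (gfact_pos hgpos n).le)

lemma hasSum_nu1 (hgpos : ∀ n, 1 ≤ n → 0 < g n) (hφ : 0 ≤ φ)
    (hZ : Summable fun n => φ ^ n / gfact g n) : HasSum (nu1 g φ) 1 := by
  have hZ0 : Zfun g φ ≠ 0 := (zero_lt_one.trans_le (one_le_Zfun hgpos hφ hZ)).ne'
  have h := hZ.hasSum.div_const (Zfun g φ)
  rw [← Zfun, div_self hZ0] at h
  have hnu : nu1 g φ = fun n => φ ^ n / gfact g n / Zfun g φ := by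
    funext n
    rw [nu1, div_div, mul_comm]
  rwa [hnu]

lemma g_succ_mul_nu1_succ (hgpos : ∀ n, 1 ≤ n → 0 < g n) (n : ℕ) :
    g (n + 1) * nu1 g φ (n + 1) = φ * nu1 g φ n := by
  have hgf := (gfact_pos hgpos n).ne'
  have hg := (hgpos (n + 1) le_add_self).ne'
  rw [nu1, nu1, gfact_succ, pow_succ]
  by_cases hZ : Zfun g φ = 0
  · simp [hZ]
  · field_simp

lemma nuM_singleton (g : ℕ → ℝ) (φ : ℝ) (n : ℕ) : nuM g φ {n} = ENNReal.ofReal (nu1 g φ n) := by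
  rw [nuM, Measure.sum_smul_dirac_singleton]

lemma isProbabilityMeasure_nuM (hgpos : ∀ n, 1 ≤ n → 0 < g n) (hφ : 0 ≤ φ)
    (hZ : Summable fun n => φ ^ n / gfact g n) : IsProbabilityMeasure (nuM g φ) := by
  constructor
  simp only [nuM, Measure.sum_apply _ MeasurableSet.univ, Measure.smul_apply, measure_univ,
    smul_eq_mul, mul_one]
  rw [← ENNReal.ofReal_tsum_of_nonneg (nu1_nonneg hgpos hφ hZ) (hasSum_nu1 hgpos hφ hZ).summable,
    (hasSum_nu1 hgpos hφ hZ).tsum_eq, ENNReal.ofReal_one]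

end OneSite

section Countable

variable {X : Type*} [MeasurableSpace X] [Countable X] [MeasurableSingletonClass X]
  {μ : Measure X} [IsFiniteMeasure μ]

lemma integrable_iff_summable_measureReal_singleton {E : Type*} [NormedAddCommGroup E]
    {f : X → E} : Integrable f μ ↔ Summable fun x => μ.real {x} * ‖f x‖ := by
  conv_lhs => rw [← Measure.sum_smul_dirac μ]
  exact integrable_sum_dirac_iff fun x => measure_ne_top μ {x}

lemma hasSum_integral_of_summable {f : X → ℝ} (hf : Summable fun x => μ.real {x} * f x) :
    HasSum (fun x => μ.real {x} * f x) (∫ x, f x ∂μ) := by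
  have hint : Integrable f μ := integrable_iff_summable_measureReal_singleton.mpr <| by
    simpa only [abs_mul, measureReal_nonneg, abs_of_nonneg, Real.norm_eq_abs] using hf.abs
  rw [integral_countable hint]
  exact hf.hasSum

lemma summable_measureReal_singleton : Summable fun x => μ.real {x} := by
  simpa using integrable_iff_summable_measureReal_singleton.mp (integrable_const (1 : ℝ) (μ := μ))

end Countable

section AddParticle

variable {T : Type*} [DecidableEq T]

def addParticle (η : T → ℕ) (x : T) : T → ℕ :=
  Function.update η x (η x + 1)

lemma addParticle_injective (x : T) : Function.Injective fun η : T → ℕ => addParticle η x := by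
  intro η η' h
  have hx : η x = η' x := by simpa [addParticle] using congrFun h x
  funext z
  by_cases hz : z = x
  · rw [hz, hx]
  · simpa [addParticle, hz] using congrFun h z

lemma mem_range_addParticle {η : T → ℕ} {x : T} (hη : η x ≠ 0) :
    η ∈ Set.range fun ξ : T → ℕ => addParticle ξ x :=
  ⟨Function.update η x (η x - 1), by simp [addParticle, Nat.sub_add_cancel (Nat.pos_of_ne_zero hη)]⟩

lemma move_addParticle {η : T → ℕ} {x y : T} (hxy : x ≠ y) :
    move (addParticle η x) x y = addParticle η y := by
  simp [move, addParticle, Function.update_idem, Function.update_of_ne hxy.symm]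

end AddParticle

section Product

variable {T : Type*} [Fintype T] {g : ℕ → ℝ} {φ : T → ℝ}

noncomputable def prodWeight (g : ℕ → ℝ) (φ : T → ℝ) (η : T → ℕ) : ℝ :=
  ∏ z, nu1 g (φ z) (η z)

lemma prodWeight_addParticle_mul [DecidableEq T] (hgpos : ∀ n, 1 ≤ n → 0 < g n) (η : T → ℕ)
    (x : T) :
    prodWeight g φ (addParticle η x) * g (η x + 1) = φ x * prodWeight g φ η := by
  have hrest : ∏ z ∈ {x}ᶜ, nu1 g (φ z) (addParticle η x z) = ∏ z ∈ {x}ᶜ, nu1 g (φ z) (η z) :=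
    Finset.prod_congr rfl fun z hz => by
      rw [addParticle, Function.update_of_ne (by simpa using hz)]
  rw [prodWeight, prodWeight, Fintype.prod_eq_mul_prod_compl x, Fintype.prod_eq_mul_prod_compl x,
    hrest, addParticle, Function.update_self]
  linear_combination (∏ z ∈ {x}ᶜ, nu1 g (φ z) (η z)) * g_succ_mul_nu1_succ (φ := φ x) hgpos (η x)

/-- Mecke-type identity `E[g(η x) G(η)] = φₓ E[G(η + δₓ)]`. -/
lemma HasSum.prodWeight_mul_g_mul [DecidableEq T] (hg0 : g 0 = 0)
    (hgpos : ∀ n, 1 ≤ n → 0 < g n) {x : T} {G : (T → ℕ) → ℝ} {s : ℝ}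
    (h : HasSum (fun ξ => prodWeight g φ ξ * G (addParticle ξ x)) s) :
    HasSum (fun η => prodWeight g φ η * (g (η x) * G η)) (φ x * s) := by
  rw [← (addParticle_injective x).hasSum_iff]
  · have hshift : (fun η => prodWeight g φ η * (g (η x) * G η)) ∘ (addParticle · x) =
        fun ξ => φ x * (prodWeight g φ ξ * G (addParticle ξ x)) := by
      funext ξ
      rw [Function.comp_apply, ← mul_assoc, ← mul_assoc, ← prodWeight_addParticle_mul hgpos,
        addParticle, Function.update_self]
    rw [hshift]
    exact h.mul_left (φ x)
  · intro η hη
    have : η x = 0 := by_contra fun h0 => hη (mem_range_addParticle h0)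
    simp [this, hg0]

lemma measureReal_pi_nuM_singleton (hgpos : ∀ n, 1 ≤ n → 0 < g n) (hφ : ∀ z, 0 ≤ φ z)
    (hZ : ∀ z, Summable fun n => φ z ^ n / gfact g n) (η : T → ℕ) :
    (Measure.pi fun z => nuM g (φ z)).real {η} = prodWeight g φ η := by
  have := fun z => isProbabilityMeasure_nuM hgpos (hφ z) (hZ z)
  simp only [measureReal_def, Measure.pi_singleton, nuM_singleton, ENNReal.toReal_prod, prodWeight]
  exact Finset.prod_congr rfl fun z _ => ENNReal.toReal_ofReal (nu1_nonneg hgpos (hφ z) (hZ z) _)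

lemma summable_prodWeight (hgpos : ∀ n, 1 ≤ n → 0 < g n) (hφ : ∀ z, 0 ≤ φ z)
    (hZ : ∀ z, Summable fun n => φ z ^ n / gfact g n) : Summable (prodWeight g φ) := by
  have := fun z => isProbabilityMeasure_nuM hgpos (hφ z) (hZ z)
  simpa only [measureReal_pi_nuM_singleton hgpos hφ hZ] using
    summable_measureReal_singleton (μ := Measure.pi fun z => nuM g (φ z))

lemma prodWeight_nonneg (hgpos : ∀ n, 1 ≤ n → 0 < g n) (hφ : ∀ z, 0 ≤ φ z)
    (hZ : ∀ z, Summable fun n => φ z ^ n / gfact g n) (η : T → ℕ) : 0 ≤ prodWeight g φ η :=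
  Finset.prod_nonneg fun z _ => nu1_nonneg hgpos (hφ z) (hZ z) _

lemma summable_prodWeight_mul (hgpos : ∀ n, 1 ≤ n → 0 < g n) (hφ : ∀ z, 0 ≤ φ z)
    (hZ : ∀ z, Summable fun n => φ z ^ n / gfact g n) {F : (T → ℕ) → ℝ} {C : ℝ}
    (hF : ∀ η, |F η| ≤ C) : Summable fun η => prodWeight g φ η * F η := by
  refine ((summable_prodWeight hgpos hφ hZ).mul_right C).of_norm_bounded fun η => ?_
  rw [norm_mul, Real.norm_of_nonneg (prodWeight_nonneg hgpos hφ hZ η), Real.norm_eq_abs]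
  exact mul_le_mul_of_nonneg_left (hF η) (prodWeight_nonneg hgpos hφ hZ η)

/-- As `(η + δₓ)^{x,y} = η + δ_y`, the Mecke identity turns both terms into expectations of `f` at
shifted configurations. -/
lemma hasSum_prodWeight_mul_jump [DecidableEq T] (hg0 : g 0 = 0) (hgpos : ∀ n, 1 ≤ n → 0 < g n)
    (hφ : ∀ z, 0 ≤ φ z) (hZ : ∀ z, Summable fun n => φ z ^ n / gfact g n) {x y : T} (hxy : x ≠ y)
    {f : (T → ℕ) → ℝ} {C : ℝ} (hf : ∀ η, |f η| ≤ C) (c : ℝ) :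
    HasSum (fun η => prodWeight g φ η * (c * g (η x) * (f (move η x y) - f η)))
      (c * φ x * ((∑' ξ, prodWeight g φ ξ * f (addParticle ξ y)) -
        ∑' ξ, prodWeight g φ ξ * f (addParticle ξ x))) := by
  have hshift : ∀ z, HasSum (fun ξ => prodWeight g φ ξ * f (addParticle ξ z))
      (∑' ξ, prodWeight g φ ξ * f (addParticle ξ z)) := fun z =>
    (summable_prodWeight_mul hgpos hφ hZ fun ξ => hf (addParticle ξ z)).hasSum
  have hdiff : HasSum (fun ξ => prodWeight g φ ξ *
      (f (move (addParticle ξ x) x y) - f (addParticle ξ x)))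
      ((∑' ξ, prodWeight g φ ξ * f (addParticle ξ y)) -
        ∑' ξ, prodWeight g φ ξ * f (addParticle ξ x)) := by
    simp only [move_addParticle hxy, mul_sub]
    exact (hshift y).sub (hshift x)
  have := (hdiff.prodWeight_mul_g_mul (G := fun η => f (move η x y) - f η) hg0 hgpos).mul_left c
  simp only [← mul_assoc] at this ⊢
  simpa only [mul_comm c, mul_assoc] using this

end Product

lemma sum_sum_ite_sub_eq_zero {T : Type*} [Fintype T] {r : T → T → Prop} [DecidableRel r]
    (hr : ∀ x y, r x y → r y x) (B : T → ℝ) : ∑ x, ∑ y, (if r x y then B y - B x else 0) = 0 := by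
  have hsplit : ∀ x y, (if r x y then B y - B x else 0) =
      (if r x y then B y else 0) - (if r y x then B x else 0) := by
    intro x y
    by_cases h : r x y
    · simp [h, hr x y h]
    · simp [h, mt (hr y x) h]
  simp only [hsplit, Finset.sum_sub_distrib]
  rw [Finset.sum_comm, sub_self]

lemma nbr_symm {d N : ℕ} (x y : Fin d → ZMod N) : nbr x y → nbr y x := by
  rintro ⟨i, hi | hi⟩
  · exact ⟨i, Or.inr (by rw [hi]; abel)⟩
  · exact ⟨i, Or.inl (by rw [hi]; abel)⟩

lemma ne_of_nbr {d N : ℕ} (hN : 2 ≤ N) {x y : Fin d → ZMod N} (h : nbr x y) : x ≠ y := by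
  have : Fact (1 < N) := ⟨hN⟩
  rintro rfl
  obtain ⟨i, hi | hi⟩ := h
  · simpa using congrFun hi i
  · have hx : x i = x i - 1 := by simpa using congrFun hi i
    exact one_ne_zero (by linear_combination hx : (1 : ZMod N) = 0)

open Classical in
lemma hasSum_prodWeight_mul_gen {d N : ℕ} [NeZero N] (hN : 2 ≤ N) {g : ℕ → ℝ} (hg0 : g 0 = 0)
    (hgpos : ∀ n, 1 ≤ n → 0 < g n) {p : (Fin d → ZMod N) → ℝ} (hp : ∀ x, 0 < p x) {φ : ℝ}
    (hφ : 0 ≤ φ) (hZ : ∀ x, Summable fun n => (φ / p x) ^ n / gfact g n)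
    {f : ((Fin d → ZMod N) → ℕ) → ℝ} {C : ℝ} (hf : ∀ η, |f η| ≤ C) :
    HasSum (fun η => prodWeight g (fun x => φ / p x) η * gen g p f η) 0 := by
  set B := fun z => ∑' ξ, prodWeight g (fun x => φ / p x) ξ * f (addParticle ξ z)
  have hpair : ∀ x y, HasSum (fun η => prodWeight g (fun x => φ / p x) η *
      if nbr x y then p x * g (η x) * (f (move η x y) - f η) else 0)
      (if nbr x y then φ * B y - φ * B x else 0) := by
    intro x y
    by_cases h : nbr x y
    · simp only [h, if_true]
      convert hasSum_prodWeight_mul_jump hg0 hgpos (fun x => div_nonneg hφ (hp x).le) hZ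
        (ne_of_nbr hN h) hf (p x) using 1
      rw [mul_div_cancel₀ _ (hp x).ne', mul_sub]
    · simp only [h, if_false, mul_zero]
      exact hasSum_zero
  have := hasSum_sum (s := Finset.univ) fun x _ =>
    hasSum_sum (s := Finset.univ) fun y _ => hpair x y
  rw [sum_sum_ite_sub_eq_zero nbr_symm] at this
  simpa only [gen, Finset.mul_sum] using this

theorem product_measure_invariant_general
    (g : ℕ → ℝ) (g₀ : ℝ) (hg₀ : 0 < g₀)
    (hgzero : g 0 = 0) (hgpos : ∀ n, 1 ≤ n → 0 < g n)
    (hlin : ∀ n, g₀ * n ≤ g n)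
    (d N : ℕ) [NeZero N] (hN : 2 ≤ N)
    (a b : ℝ) (ha : 0 < a)
    (p : (Fin d → ZMod N) → ℝ) (hp : ∀ x, p x ∈ Set.Icc a b)
    (φ : ℝ) (hφ : 0 ≤ φ)
    (f : ((Fin d → ZMod N) → ℕ) → ℝ) (hf : ∃ C, ∀ η, |f η| ≤ C) :
    ∫ η, gen g p f η ∂(Measure.pi fun x => nuM g (φ / p x)) = 0 := by
  obtain ⟨C, hC⟩ := hf
  have hp_pos : ∀ x, 0 < p x := fun x => ha.trans_le (hp x).1
  have hφx : ∀ x, 0 ≤ φ / p x := fun x => div_nonneg hφ (hp_pos x).le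
  have hZ : ∀ x, Summable fun n => (φ / p x) ^ n / gfact g n :=
    fun x => summable_pow_div_gfact hg₀ hlin (hφx x)
  have := fun x => isProbabilityMeasure_nuM hgpos (hφx x) (hZ x)
  have hsum := hasSum_prodWeight_mul_gen hN hgzero hgpos hp_pos hφ hZ hC
  simp only [← measureReal_pi_nuM_singleton hgpos hφx hZ] at hsum
  exact (hasSum_integral_of_summable hsum.summable).unique hsum

/-- The product measure `ν^{N,p}_φ` is invariant for the zero-range generator:
for every bounded `f`, `∫ 𝓛_N f dν^{N,p}_φ = 0`. -/
theorem product_measure_invariant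
    (g : ℕ → ℝ) (g₀ gstar : ℝ) (hg₀ : 0 < g₀) (hgs : g₀ ≤ gstar)
    (hgzero : g 0 = 0) (hgpos : ∀ n, 1 ≤ n → 0 < g n)
    (hLip : ∀ n, |g (n + 1) - g n| ≤ gstar)
    (hlin : ∀ n, g₀ * n ≤ g n)
    (d N : ℕ) [NeZero N] (hN : 2 ≤ N)
    (a b : ℝ) (ha : 0 < a) (hab : a < b)
    (p : (Fin d → ZMod N) → ℝ) (hp : ∀ x, p x ∈ Set.Icc a b)
    (φ : ℝ) (hφ : 0 ≤ φ)
    (f : ((Fin d → ZMod N) → ℕ) → ℝ) (hf : ∃ C, ∀ η, |f η| ≤ C) :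
    ∫ η, gen g p f η ∂(Measure.pi fun x => nuM g (φ / p x)) = 0 :=
  product_measure_invariant_general g g₀ hg₀ hgzero hgpos hlin d N hN a b ha p hp φ hφ f hf
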